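/- arXiv:1310.5895 — 3 statements merged into one kernel-verified Lean document; each statement's English description precedes it below -/
import Mathlib

section
/- Let n ∈ ℕ and let s, f ∈ ℕ with s ≤ f ≤ n. Then there exists a constant α > 0 (depending on s, f, n) such that for all x ∈ ℂ^n with at most s non-zero entries and all y ∈ ℂ^n with at most f non-zero entries, it holds that α·‖x‖·‖y‖ ≤ ‖(x,0) ⊛ (y,0)‖ ≤ √s·‖x‖·‖y‖, where (x,0), (y,0) ∈ ℂ^{2n−1} denote the vectors padded by n−1 zeros, ⊛ is the circular convolution in ℂ^{2n−1}, and ‖·‖ is the Euclidean norm. -/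
open scoped BigOperators

/-!
Upper bound: the convolution `u ⊛ v = ∑ₗ uₗ • (v shifted by l)` is a combination of isometric
cyclic shifts of `v`, so `‖u ⊛ v‖ ≤ ‖u‖₁ ‖v‖`, and `‖u‖₁ ≤ √s ‖u‖` for `s`-sparse `u` by
Cauchy–Schwarz on the support of `u`.

Lower bound: thanks to the zero padding there is no wrap-around, so if `i`, `j` are the last
nonzero indices of `x`, `y`, then `((x,0) ⊛ (y,0))_{i+j} = x_i y_j ≠ 0`. Hence
`(x, y) ↦ (x,0) ⊛ (y,0)` is a bilinear map without zero divisors, and on the compact product of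
unit spheres its norm attains a positive minimum `α`; homogeneity gives
`α ‖x‖ ‖y‖ ≤ ‖(x,0) ⊛ (y,0)‖`.
-/

/-- Circular convolution on `ℂ^m`: `(u ⊛ v)_k = ∑_l u_l v_{(k-l) mod m}`. -/
noncomputable def cconv {m : ℕ} (u v : Fin m → ℂ) : Fin m → ℂ :=
  fun k => ∑ l : Fin m, u l * v (k - l)

/-- Circular correlation on `ℂ^m`: `(u ⋆ v)_k = ∑_l u_l conj (v_{(k+l) mod m})`. -/
noncomputable def ccorr {m : ℕ} (u v : Fin m → ℂ) : Fin m → ℂ :=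
  fun k => ∑ l : Fin m, u l * (starRingEnd ℂ) (v (k + l))

/-- Euclidean (ℓ²) norm of a vector. -/
noncomputable def euclNorm {m : ℕ} {E : Type*} [SeminormedAddGroup E] (x : Fin m → E) : ℝ :=
  Real.sqrt (∑ i, ‖x i‖ ^ 2)

/-- Zero padding `ℂ^n → ℂ^m` (entries of `x` followed by zeros). -/
def pad (n m : ℕ) (x : Fin n → ℂ) : Fin m → ℂ :=
  fun k => if h : (k : ℕ) < n then x ⟨k, h⟩ else 0

/-- `x` has at most `s` nonzero entries. -/
def sparse {n : ℕ} (s : ℕ) (x : Fin n → ℂ) : Prop :=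
  Set.ncard {i | x i ≠ 0} ≤ s

/-- The unitary DFT matrix `F_{kl} = m^{-1/2} exp(2πi kl/m)`. -/
noncomputable def dft (m : ℕ) : Matrix (Fin m) (Fin m) ℂ :=
  fun k l => ((Real.sqrt m : ℝ) : ℂ)⁻¹ *
    Complex.exp (2 * (Real.pi : ℂ) * Complex.I * ((k : ℕ) : ℂ) * ((l : ℕ) : ℂ) / (m : ℂ))

/-- Cyclic shift: `(S x)_k = x_{(k-1) mod m}`. -/
def shiftOp {m : ℕ} (x : Fin m → ℂ) : Fin m → ℂ :=
  fun k => x ⟨((k : ℕ) + (m - 1)) % m, Nat.mod_lt _ (by have := k.isLt; omega)⟩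

/-- Time reversal: `(Γ x)_k = x_{(-k) mod m}`. -/
def rev {m : ℕ} (u : Fin m → ℂ) : Fin m → ℂ := fun k => u (-k)

/-- Symmetrization `𝒮 : ℂ^n → ℂ^{2n-1}`,
`𝒮(x) = (x_0, …, x_{n-1}, conj x_{n-1}, …, conj x_1)`. -/
noncomputable def symmetrize (n : ℕ) (x : Fin n → ℂ) : Fin (2 * n - 1) → ℂ :=
  fun k =>
    if h : (k : ℕ) < n then x ⟨k, h⟩
    else (starRingEnd ℂ) (x ⟨2 * n - 1 - (k : ℕ), by have := k.isLt; omega⟩)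

/-- Zero-padded symmetrization `𝒮_z : ℂ^n → ℂ^{4n-3}`, `𝒮_z(x) = 𝒮((x, 0_{n-1}))`. -/
noncomputable def symmetrizeZ (n : ℕ) (x : Fin n → ℂ) : Fin (4 * n - 3) → ℂ :=
  fun k => symmetrize (2 * n - 1) (pad n (2 * n - 1) x) ⟨(k : ℕ), by have := k.isLt; omega⟩

/-- `𝒮_z' : ℂ^n → ℂ^{4n-1}`,
`𝒮_z'(x) = (0_n, x_0, …, x_{n-1}, conj x_{n-1}, …, conj x_0, 0_{n-1})`. -/
noncomputable def symmetrizeZ' (n : ℕ) (x : Fin n → ℂ) : Fin (4 * n - 1) → ℂ :=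
  fun k =>
    if _ : (k : ℕ) < n then 0
    else if h2 : (k : ℕ) < 2 * n then x ⟨(k : ℕ) - n, by omega⟩
    else if h3 : (k : ℕ) < 3 * n then (starRingEnd ℂ) (x ⟨3 * n - 1 - (k : ℕ), by omega⟩)
    else 0

open Metric in
theorem ContinuousLinearMap.exists_pos_mul_norm_mul_norm_le {𝕜 E F G : Type*} [RCLike 𝕜]
    [NormedAddCommGroup E] [NormedSpace 𝕜 E] [FiniteDimensional 𝕜 E]
    [NormedAddCommGroup F] [NormedSpace 𝕜 F] [FiniteDimensional 𝕜 F]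
    [NormedAddCommGroup G] [NormedSpace 𝕜 G] (B : E →L[𝕜] F →L[𝕜] G)
    (hB : ∀ x y, x ≠ 0 → y ≠ 0 → B x y ≠ 0) :
    ∃ α > 0, ∀ x y, α * ‖x‖ * ‖y‖ ≤ ‖B x y‖ := by
  have : ProperSpace E := FiniteDimensional.proper_rclike 𝕜 E
  have : ProperSpace F := FiniteDimensional.proper_rclike 𝕜 F
  set S := sphere (0 : E) 1 ×ˢ sphere (0 : F) 1
  have normalize_mem : ∀ x y, x ≠ 0 → y ≠ 0 → ((‖x‖⁻¹ : 𝕜) • x, (‖y‖⁻¹ : 𝕜) • y) ∈ S :=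
    fun x y hx hy => by simp [S, norm_smul_inv_norm hx, norm_smul_inv_norm hy]
  suffices ∃ α > 0, ∀ x y, x ≠ 0 → y ≠ 0 → α ≤ ‖B ((‖x‖⁻¹ : 𝕜) • x) ((‖y‖⁻¹ : 𝕜) • y)‖ by
    obtain ⟨α, hα, hle⟩ := this
    refine ⟨α, hα, fun x y => ?_⟩
    rcases eq_or_ne x 0 with rfl | hx
    · simp
    rcases eq_or_ne y 0 with rfl | hy
    · simp
    have := hle x y hx hy
    simp only [map_smul, smul_apply, norm_smul, norm_inv,
      RCLike.norm_ofReal, abs_norm] at this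
    calc α * ‖x‖ * ‖y‖ ≤ ‖y‖⁻¹ * (‖x‖⁻¹ * ‖B x y‖) * ‖x‖ * ‖y‖ := by gcongr
      _ = ‖B x y‖ := by field_simp
  rcases S.eq_empty_or_nonempty with hS | hS
  · exact ⟨1, one_pos, fun x y hx hy =>
      absurd (normalize_mem x y hx hy) (hS ▸ Set.notMem_empty _)⟩
  obtain ⟨p, ⟨hp₁, hp₂⟩, hmin⟩ :=
    ((isCompact_sphere _ _).prod (isCompact_sphere _ _)).exists_isMinOn hS
      B.continuous₂.norm.continuousOn
  refine ⟨‖B p.1 p.2‖, norm_pos_iff.2 (hB _ _ ?_ ?_),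
    fun x y hx hy => hmin (normalize_mem x y hx hy)⟩
  · exact ne_zero_of_mem_unit_sphere ⟨p.1, hp₁⟩
  · exact ne_zero_of_mem_unit_sphere ⟨p.2, hp₂⟩

theorem euclNorm_eq_norm_toLp {m : ℕ} {E : Type*} [SeminormedAddCommGroup E] (x : Fin m → E) :
    euclNorm x = ‖WithLp.toLp 2 x‖ :=
  (PiLp.norm_eq_of_L2 _).symm

theorem pad_add (n m : ℕ) (x y : Fin n → ℂ) : pad n m (x + y) = pad n m x + pad n m y := by
  ext k; by_cases h : (k : ℕ) < n <;> simp [pad, h]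

theorem pad_smul (n m : ℕ) (c : ℂ) (x : Fin n → ℂ) : pad n m (c • x) = c • pad n m x := by
  ext k; by_cases h : (k : ℕ) < n <;> simp [pad, h]

theorem sparse_pad {n m s : ℕ} (h : n ≤ m) {x : Fin n → ℂ} (hx : sparse s x) :
    sparse s (pad n m x) := by
  have hsub : {k | pad n m x k ≠ 0} ⊆ Fin.castLE h '' {i | x i ≠ 0} := by
    intro k (hk : pad n m x k ≠ 0)
    unfold pad at hk
    split_ifs at hk with hkn
    · exact ⟨⟨k, hkn⟩, hk, rfl⟩
    · exact absurd rfl hk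
  exact (Set.ncard_le_ncard hsub (Set.toFinite _)).trans
    ((Set.ncard_image_le (Set.toFinite _)).trans hx)

theorem euclNorm_pad {n m : ℕ} (h : n ≤ m) (x : Fin n → ℂ) :
    euclNorm (pad n m x) = euclNorm x := by
  unfold euclNorm
  congr 1
  refine (Fintype.sum_of_injective (Fin.castLE h) (Fin.castLE_injective h) _ _ (fun k hk => ?_)
    fun i => by simp [pad]).symm
  simp only [pad]
  split_ifs with hkn
  · exact absurd ⟨⟨k, hkn⟩, rfl⟩ hk
  · simp

theorem pad_apply_eq_zero_of_lt {n m : ℕ} {x : Fin n → ℂ} {i : Fin n}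
    (hx : ∀ j, i < j → x j = 0) (k : Fin m) (hk : (i : ℕ) < k) : pad n m x k = 0 := by
  unfold pad
  split_ifs with h
  · exact hx _ hk
  · rfl

theorem euclNorm_cconv_le_sum_norm_mul_euclNorm {m : ℕ} (u v : Fin m → ℂ) :
    euclNorm (cconv u v) ≤ (∑ l, ‖u l‖) * euclNorm v := by
  have hdecomp : WithLp.toLp 2 (cconv u v) = ∑ l, u l • WithLp.toLp 2 (fun k => v (k - l)) := by
    ext k; simp [cconv]
  have hshift (l : Fin m) : euclNorm (fun k => v (k - l)) = euclNorm v := by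
    have : NeZero m := NeZero.of_pos l.pos
    unfold euclNorm; congr 1; exact Fintype.sum_equiv (Equiv.subRight l) _ _ fun _ => rfl
  simp only [euclNorm_eq_norm_toLp] at hshift ⊢
  rw [hdecomp, Finset.sum_mul]
  refine (norm_sum_le _ _).trans (Finset.sum_le_sum fun l _ => ?_)
  rw [norm_smul, hshift]

theorem sum_norm_le_sqrt_mul_euclNorm_of_sparse {m s : ℕ} {u : Fin m → ℂ} (hu : sparse s u) :
    ∑ l, ‖u l‖ ≤ √s * euclNorm u := by
  classical
  set T := Finset.univ.filter (fun l => u l ≠ 0)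
  have hT : (T.card : ℝ) ≤ s := by
    have : T.card ≤ s := by simpa [sparse, Set.ncard_eq_toFinset_card', T] using hu
    exact_mod_cast this
  rw [← Finset.sum_filter_of_ne fun l _ h => norm_ne_zero_iff.1 h]
  calc ∑ l ∈ T, ‖u l‖ ≤ √(T.card * ∑ l ∈ T, ‖u l‖ ^ 2) :=
        Real.le_sqrt_of_sq_le (sq_sum_le_card_mul_sum_sq ..)
    _ ≤ √(s * ∑ l, ‖u l‖ ^ 2) := by
        gcongr
        exact Finset.subset_univ T
    _ = √s * euclNorm u := Real.sqrt_mul (Nat.cast_nonneg _) _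

theorem exists_ne_zero_and_forall_gt_eq_zero {ι M : Type*} [Fintype ι] [LinearOrder ι] [Zero M]
    {x : ι → M} (hx : x ≠ 0) : ∃ i, x i ≠ 0 ∧ ∀ j, i < j → x j = 0 := by
  classical
  obtain ⟨i, hi, hmax⟩ := (Finset.univ.filter (x · ≠ 0)).exists_max_image id
    (by simpa [Finset.filter_nonempty_iff, Function.ne_iff] using hx)
  exact ⟨i, (Finset.mem_filter.1 hi).2,
    fun j hij => by_contra fun hj => (hmax j (by simpa using hj)).not_gt hij⟩

theorem cconv_apply_add_eq_mul {m i j : ℕ} (hij : i + j < m) {u v : Fin m → ℂ}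
    (hu : ∀ l : Fin m, i < l → u l = 0) (hv : ∀ l : Fin m, j < l → v l = 0) :
    cconv u v ⟨i + j, hij⟩ = u ⟨i, by omega⟩ * v ⟨j, by omega⟩ := by
  rw [cconv, Finset.sum_eq_single ⟨i, by omega⟩ _ (by simp)]
  · congr
    ext
    rw [Fin.coe_sub_iff_le.2 (Fin.le_def.2 (by simp))]
    simp
  · intro l _ hl
    have hne : (l : ℕ) ≠ i := fun h => hl (Fin.ext h)
    rcases lt_or_gt_of_ne hne with hlt | hgt
    · rw [hv _ ?_, mul_zero]
      rw [Fin.coe_sub_iff_le.2 (Fin.le_def.2 (by simp only; omega))]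
      simp only
      omega
    · rw [hu _ hgt, zero_mul]

theorem cconv_pad_ne_zero {n : ℕ} {x y : Fin n → ℂ} (hx : x ≠ 0) (hy : y ≠ 0) :
    cconv (pad n (2 * n - 1) x) (pad n (2 * n - 1) y) ≠ 0 := by
  obtain ⟨i, hi, hxi⟩ := exists_ne_zero_and_forall_gt_eq_zero hx
  obtain ⟨j, hj, hyj⟩ := exists_ne_zero_and_forall_gt_eq_zero hy
  have hij : (i : ℕ) + j < 2 * n - 1 := by omega
  intro h
  have := congrFun h ⟨i + j, hij⟩
  rw [cconv_apply_add_eq_mul hij (pad_apply_eq_zero_of_lt hxi)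
    (pad_apply_eq_zero_of_lt hyj)] at this
  simp [pad, hi, hj] at this

noncomputable def padConv (n : ℕ) :
    EuclideanSpace ℂ (Fin n) →L[ℂ] EuclideanSpace ℂ (Fin n) →L[ℂ]
      EuclideanSpace ℂ (Fin (2 * n - 1)) :=
  LinearMap.toContinuousLinearMap <|
    (LinearMap.toContinuousLinearMap : _ ≃ₗ[ℂ] _).toLinearMap ∘ₗ
      LinearMap.mk₂ ℂ
        (fun x y => WithLp.toLp 2 (cconv (pad n (2 * n - 1) x.ofLp) (pad n (2 * n - 1) y.ofLp)))
        (fun x x' y => by ext k; simp [cconv, pad_add, add_mul, Finset.sum_add_distrib])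
        (fun c x y => by ext k; simp [cconv, pad_smul, mul_assoc, Finset.mul_sum])
        (fun x y y' => by ext k; simp [cconv, pad_add, mul_add, Finset.sum_add_distrib])
        (fun c x y => by ext k; simp [cconv, pad_smul, mul_left_comm, Finset.mul_sum])

theorem padConv_apply (n : ℕ) (x y : Fin n → ℂ) :
    padConv n (WithLp.toLp 2 x) (WithLp.toLp 2 y) =
      WithLp.toLp 2 (cconv (pad n (2 * n - 1) x) (pad n (2 * n - 1) y)) := rfl

theorem rnmp_circular_convolution_general (n s f : ℕ) :
    ∃ α : ℝ, 0 < α ∧ ∀ x y : Fin n → ℂ, sparse s x → sparse f y →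
      α * euclNorm x * euclNorm y ≤
          euclNorm (cconv (pad n (2 * n - 1) x) (pad n (2 * n - 1) y)) ∧
      euclNorm (cconv (pad n (2 * n - 1) x) (pad n (2 * n - 1) y)) ≤
          Real.sqrt s * euclNorm x * euclNorm y := by
  obtain ⟨α, hα, hlower⟩ := (padConv n).exists_pos_mul_norm_mul_norm_le fun x y hx hy =>
    mt (WithLp.toLp_eq_zero 2).1 <| cconv_pad_ne_zero (x := x.ofLp) (y := y.ofLp)
      (by simpa using hx) (by simpa using hy)
  refine ⟨α, hα, fun x y hx _ => ⟨?_, ?_⟩⟩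
  · simpa only [euclNorm_eq_norm_toLp, padConv_apply] using
      hlower (WithLp.toLp 2 x) (WithLp.toLp 2 y)
  · have hn : n ≤ 2 * n - 1 := by omega
    calc _ ≤ (∑ l, ‖pad n (2 * n - 1) x l‖) * euclNorm (pad n (2 * n - 1) y) :=
          euclNorm_cconv_le_sum_norm_mul_euclNorm _ _
      _ ≤ √s * euclNorm (pad n (2 * n - 1) x) * euclNorm (pad n (2 * n - 1) y) := by
        gcongr
        · exact Real.sqrt_nonneg _
        · exact sum_norm_le_sqrt_mul_euclNorm_of_sparse (sparse_pad hn hx)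
      _ = √s * euclNorm x * euclNorm y := by rw [euclNorm_pad hn, euclNorm_pad hn]

/-- RNMP for circular convolutions of zero-padded sparse vectors. -/
theorem rnmp_circular_convolution (n s f : ℕ) (hsf : s ≤ f) (hfn : f ≤ n) :
    ∃ α : ℝ, 0 < α ∧ ∀ x y : Fin n → ℂ, sparse s x → sparse f y →
      α * euclNorm x * euclNorm y ≤
          euclNorm (cconv (pad n (2 * n - 1) x) (pad n (2 * n - 1) y)) ∧
      euclNorm (cconv (pad n (2 * n - 1) x) (pad n (2 * n - 1) y)) ≤
          Real.sqrt s * euclNorm x * euclNorm y :=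
  rnmp_circular_convolution_general n s f
end

section
/- Let n ∈ ℕ, n ≥ 1, set ñ = 4n−3, and let 𝒮_z : ℂ^n → ℂ^{ñ} be the zero-padded symmetrization 𝒮_z(x) = 𝒮((x, 0_{n−1})), where 𝒮 : ℂ^{2n−1} → ℂ^{4n−3} is the symmetrization map. Then for every x ∈ ℂ^n with x_0 ∈ ℝ, F(𝒮_z(x) ⊛ 𝒮_z(x)) = √ñ · |F 𝒮_z(x)|², where F is the ñ×ñ unitary DFT matrix and |z|² denotes the vector of componentwise squared moduli. -/
open scoped BigOperators

/-! Each row of `F` is, up to the factor `1/√m`, a character `l ↦ ω ^ l` of `ℤ/m` with `|ω| = 1`.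
Multiplicativity gives the convolution theorem `F(u ⊛ v) = √m · Fu · Fv`, and `ω ^ (-l) = conj (ω ^ l)`
shows that a Hermitian vector (`u (-l) = conj (u l)`) has a real DFT. The vector `𝒮_z(x)` is
Hermitian, the condition at index `0` being exactly `x_0 ∈ ℝ`; so `z = (F 𝒮_z(x))_k` is real and
`z · z = |z|²`. -/

open Complex ComplexConjugate Real Matrix

section Dft

variable {m : ℕ}

theorem exists_dft_apply_eq_pow (k : Fin m) :
    ∃ ω : ℂ, ω ^ m = 1 ∧ ‖ω‖ = 1 ∧ ∀ l : Fin m, dft m k l = ((√m : ℝ) : ℂ)⁻¹ * ω ^ (l : ℕ) := by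
  have hζ := isPrimitiveRoot_exp m (Fin.pos k).ne'
  refine ⟨exp (2 * π * I / m) ^ (k : ℕ), ?_, ?_, fun l => ?_⟩
  · rw [← pow_mul, pow_mul', hζ.pow_eq_one, one_pow]
  · rw [norm_pow, hζ.norm'_eq_one (Fin.pos k).ne', one_pow]
  · rw [← pow_mul, ← Complex.exp_nat_mul]
    unfold dft
    congr 2
    push_cast
    ring

theorem dft_apply_add (k a b : Fin m) :
    dft m k (a + b) = ((√m : ℝ) : ℂ) * dft m k a * dft m k b := by
  obtain ⟨ω, hω, -, hdft⟩ := exists_dft_apply_eq_pow k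
  have hsqrt : ((√m : ℝ) : ℂ) ≠ 0 := by
    exact_mod_cast (Real.sqrt_pos.mpr (Nat.cast_pos.mpr (Fin.pos k))).ne'
  simp only [hdft, Fin.val_add, ← pow_eq_pow_mod _ hω, pow_add]
  field_simp

theorem dft_apply_neg (k a : Fin m) : dft m k (-a) = conj (dft m k a) := by
  obtain ⟨ω, hω, hnorm, hdft⟩ := exists_dft_apply_eq_pow k
  have hinv : ω ^ (m - a : ℕ) = (ω ^ (a : ℕ))⁻¹ := by
    refine eq_inv_of_mul_eq_one_left ?_
    rw [← pow_add, Nat.sub_add_cancel a.isLt.le, hω]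
  rw [hdft, hdft, Fin.val_neg', ← pow_eq_pow_mod _ hω, hinv,
    inv_eq_conj (z := ω ^ (a : ℕ)) (by rw [norm_pow, hnorm, one_pow]), map_mul, map_inv₀,
    conj_ofReal]

theorem dft_mulVec_cconv (u v : Fin m → ℂ) :
    dft m *ᵥ cconv u v = ((√m : ℝ) : ℂ) • ((dft m *ᵥ u) * (dft m *ᵥ v)) := by
  ext k
  have := NeZero.of_pos k.pos
  have shift (l : Fin m) :
      ∑ j, dft m k j * v (j - l) = ((√m : ℝ) : ℂ) * dft m k l * (dft m *ᵥ v) k := by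
    rw [mulVec, dotProduct, Finset.mul_sum]
    refine Fintype.sum_equiv (Equiv.subRight l) _ _ fun j => ?_
    rw [Equiv.subRight_apply, ← mul_assoc, ← dft_apply_add, add_sub_cancel]
  calc (dft m *ᵥ cconv u v) k = ∑ l, u l * ∑ j, dft m k j * v (j - l) := by
        simp only [mulVec, dotProduct, cconv, Finset.mul_sum]
        rw [Finset.sum_comm]
        exact Finset.sum_congr rfl fun _ _ => Finset.sum_congr rfl fun _ _ => by ring
    _ = ((√m : ℝ) : ℂ) * ((dft m *ᵥ u) k * (dft m *ᵥ v) k) := by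
        rw [mulVec, dotProduct, Finset.sum_mul, Finset.mul_sum]
        exact Finset.sum_congr rfl fun l _ => by rw [shift]; ring

theorem isSelfAdjoint_dft_mulVec {u : Fin m → ℂ} (hu : rev u = star u) :
    IsSelfAdjoint (dft m *ᵥ u) := by
  refine funext fun k => ?_
  have := NeZero.of_pos k.pos
  change star (∑ j, dft m k j * u j) = ∑ j, dft m k j * u j
  rw [star_sum]
  refine Fintype.sum_equiv (Equiv.neg (Fin m)) _ _ fun j => ?_
  rw [Equiv.neg_apply, dft_apply_neg, star_mul', show u (-j) = rev u j from rfl, hu]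
  rfl

end Dft

theorem rev_symmetrize {n : ℕ} (hn : 0 < n) (y : Fin n → ℂ) (hy : (y ⟨0, hn⟩).im = 0) :
    rev (symmetrize n y) = star (symmetrize n y) := by
  funext k
  have := NeZero.of_pos k.pos
  rcases eq_or_ne k 0 with rfl | hk0
  · simpa [rev, symmetrize, hn] using (conj_eq_iff_im.mpr hy).symm
  have hk : 0 < (k : ℕ) := Nat.pos_of_ne_zero (Fin.val_ne_zero_iff.mpr hk0)
  have hkN := k.isLt
  have hneg : ((-k : Fin (2 * n - 1)) : ℕ) = 2 * n - 1 - k := by rw [Fin.val_neg, if_neg hk0]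
  simp only [rev, Pi.star_apply, symmetrize, hneg]
  split_ifs
  · omega
  · exact (conj_conj _).symm
  · exact congrArg (fun i => conj (y i)) (Fin.ext (by simp only; omega))
  · omega

theorem rev_comp_finCast {m m' : ℕ} (h : m = m') (u : Fin m' → ℂ) :
    rev (u ∘ Fin.cast h) = rev u ∘ Fin.cast h := by
  subst h
  rfl

theorem rev_symmetrizeZ {n : ℕ} (hn : 0 < n) (x : Fin n → ℂ) (hx : (x ⟨0, hn⟩).im = 0) :
    rev (symmetrizeZ n x) = star (symmetrizeZ n x) := by
  have hpad := rev_symmetrize (by omega) (pad n (2 * n - 1) x) (by simpa [pad, hn] using hx)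
  have hcomp : symmetrizeZ n x = symmetrize (2 * n - 1) (pad n (2 * n - 1) x) ∘
      Fin.cast (by omega : 4 * n - 3 = 2 * (2 * n - 1) - 1) := rfl
  rw [hcomp, rev_comp_finCast, hpad]
  rfl

/-- `F(𝒮_z(x) ⊛ 𝒮_z(x)) = √ñ |F 𝒮_z(x)|²` for `x` with real zeroth entry, `ñ = 4n-3`. -/
theorem dft_autoconv_symmetrizeZ (n : ℕ) (hn : 0 < n) (x : Fin n → ℂ)
    (hx : (x ⟨0, hn⟩).im = 0) :
    (dft (4 * n - 3)).mulVec (cconv (symmetrizeZ n x) (symmetrizeZ n x)) =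
      fun k => ((Real.sqrt (4 * n - 3) : ℝ) : ℂ) *
        ((‖(dft (4 * n - 3)).mulVec (symmetrizeZ n x) k‖ ^ 2 : ℝ) : ℂ) := by
  have hreal := isSelfAdjoint_dft_mulVec (rev_symmetrizeZ hn x hx)
  rw [dft_mulVec_cconv]
  funext k
  have hz : conj ((dft (4 * n - 3) *ᵥ symmetrizeZ n x) k) = _ := congrFun hreal k
  rw [Pi.smul_apply, Pi.mul_apply, smul_eq_mul]
  nth_rw 1 [← hz]
  rw [conj_mul', Nat.cast_sub (by omega)]
  push_cast
  rfl
end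

section
/- Let n ∈ ℕ, n ≥ 1, set ñ = 4n−1, let F be the ñ×ñ unitary DFT matrix, and let 𝒮_z' : ℂ^n → ℂ^{ñ} be defined by 𝒮_z'(x) = (0_n, x_0, …, x_{n−1}, conj(x_{n−1}), …, conj(x_0), 0_{n−1}). Then for all x₁, x₂ ∈ ℂ^n, if |F 𝒮_z'(x₁)|² = |F 𝒮_z'(x₂)|² (componentwise), then x₁ = x₂ or x₁ = −x₂. -/
open scoped BigOperators

/-!
The DFT of `s ∈ ℂ^m` at `k` is `m^{-1/2}` times the value of `∑ s_l X^l` at `ω^k`,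
`ω = exp(2πi/m)`. For `s = 𝒮_z'(x)` this polynomial is `X^n P_x` with
`P_x = ∑ x_j X^j + ∑ conj(x_j) X^{2n-1-j}`, whose values on the unit circle satisfy
`conj(P_x ζ) ζ^{2n-1} = P_x ζ`, hence `(P_x ζ)² = |P_x ζ|² ζ^{2n-1}`. Equal magnitudes thus give
`P_{x₁}² = P_{x₂}²` at the `4n-1` points `ω^k`; as `(P_{x₁} - P_{x₂})(P_{x₁} + P_{x₂})` has degree
at most `4n-2`, it vanishes, so `P_{x₁} = ±P_{x₂}`, and the first `n` coefficients give
`x₁ = ±x₂`.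
-/

open Polynomial Complex ComplexConjugate Real Matrix

theorem eq_or_eq_neg_of_sq_eval_pow_eq {R : Type*} [CommRing R] [IsDomain R] {p q : R[X]}
    {d m : ℕ} {ω : R} (hω : IsPrimitiveRoot ω m) (hp : p.natDegree ≤ d) (hq : q.natDegree ≤ d)
    (hdm : 2 * d < m) (h : ∀ k : Fin m, p.eval (ω ^ (k : ℕ)) ^ 2 = q.eval (ω ^ (k : ℕ)) ^ 2) :
    p = q ∨ p = -q := by
  have hprod : (p - q) * (p + q) = 0 := by
    refine eq_zero_of_natDegree_lt_card_of_eval_eq_zero _ (f := fun k : Fin m => ω ^ (k : ℕ))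
      (fun a b hab => Fin.ext (hω.pow_inj a.isLt b.isLt hab)) (fun k => ?_) ?_
    · simp only [eval_mul, eval_sub, eval_add]
      linear_combination h k
    · calc ((p - q) * (p + q)).natDegree ≤ (p - q).natDegree + (p + q).natDegree :=
            natDegree_mul_le
        _ ≤ d + d := add_le_add ((natDegree_sub_le _ _).trans (max_le hp hq))
            (natDegree_add_le_of_degree_le hp hq)
        _ < Fintype.card (Fin m) := by rw [Fintype.card_fin]; omega
  rcases mul_eq_zero.mp hprod with hsub | hadd
  · exact Or.inl (sub_eq_zero.mp hsub)
  · exact Or.inr (eq_neg_of_add_eq_zero_left hadd)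

theorem sq_eval_eq_of_reflect_eq_map_conj {q : ℂ[X]} {N : ℕ} (hq : q.natDegree ≤ N)
    (hrefl : q.reflect N = q.map (starRingEnd ℂ)) {ζ : ℂ} (hζ : ‖ζ‖ = 1) :
    q.eval ζ ^ 2 = (‖q.eval ζ‖ ^ 2 : ℝ) * ζ ^ N := by
  have hinv : conj ζ * ζ = 1 := by rw [conj_mul', hζ]; simp
  let _ : Invertible ζ := ⟨conj ζ, hinv, by rw [mul_comm, hinv]⟩
  have hpal : conj (q.eval ζ) * ζ ^ N = q.eval ζ := by
    have := eval₂_reflect_mul_pow (RingHom.id ℂ) ζ N q hq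
    rw [hrefl, eval₂_map, RingHom.id_comp] at this
    rw [← eval₂_at_apply]
    exact this
  calc q.eval ζ ^ 2 = q.eval ζ * conj (q.eval ζ) * ζ ^ N := by rw [mul_assoc, hpal, sq]
    _ = (‖q.eval ζ‖ ^ 2 : ℝ) * ζ ^ N := by rw [mul_conj']; norm_cast

noncomputable def conjSymm (N : ℕ) (p : ℂ[X]) : ℂ[X] :=
  p + (p.map (starRingEnd ℂ)).reflect N

theorem reflect_conjSymm (N : ℕ) (p : ℂ[X]) :
    (conjSymm N p).reflect N = (conjSymm N p).map (starRingEnd ℂ) := by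
  simp [conjSymm, reflect_add, reflect_map, Polynomial.map_map, add_comm]

theorem natDegree_conjSymm_le {N : ℕ} {p : ℂ[X]} (hp : p.natDegree ≤ N) :
    (conjSymm N p).natDegree ≤ N :=
  natDegree_add_le_of_degree_le hp
    (natDegree_reflect_le.trans (max_le le_rfl (natDegree_map_le.trans hp)))

theorem natDegree_ofFn_le {R : Type*} [Semiring R] [DecidableEq R] {n N : ℕ} (v : Fin n → R)
    (h : n ≤ N + 1) : (ofFn n v).natDegree ≤ N :=
  natDegree_le_iff_coeff_eq_zero.mpr fun _ hi => ofFn_coeff_eq_zero_of_ge v (by omega)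

theorem dft_mulVec_apply (m : ℕ) (s : Fin m → ℂ) (k : Fin m) :
    (dft m *ᵥ s) k = ((√m : ℝ) : ℂ)⁻¹ * (ofFn m s).eval (exp (2 * π * I / m) ^ (k : ℕ)) := by
  simp only [mulVec, dotProduct, dft, ofFn_eq_sum_monomial, eval_finsetSum, eval_monomial,
    Finset.mul_sum, ← Complex.exp_nat_mul]
  refine Finset.sum_congr rfl fun l _ => ?_
  ring_nf

noncomputable def symPoly (n : ℕ) (x : Fin n → ℂ) : ℂ[X] :=
  conjSymm (2 * n - 1) (ofFn n x)

theorem natDegree_symPoly_le (n : ℕ) (x : Fin n → ℂ) : (symPoly n x).natDegree ≤ 2 * n - 1 :=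
  natDegree_conjSymm_le (natDegree_ofFn_le x (by omega))

theorem sq_eval_symPoly (n : ℕ) (x : Fin n → ℂ) {ζ : ℂ} (hζ : ‖ζ‖ = 1) :
    (symPoly n x).eval ζ ^ 2 = (‖(symPoly n x).eval ζ‖ ^ 2 : ℝ) * ζ ^ (2 * n - 1) :=
  sq_eval_eq_of_reflect_eq_map_conj (natDegree_symPoly_le n x) (reflect_conjSymm _ _) hζ

theorem coeff_symPoly (n : ℕ) (x : Fin n → ℂ) (j : ℕ) :
    (symPoly n x).coeff j =
      if h : j < n then x ⟨j, h⟩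
      else if h' : j < 2 * n then conj (x ⟨2 * n - 1 - j, by omega⟩) else 0 := by
  rw [symPoly, conjSymm, coeff_add, coeff_reflect, coeff_map]
  split_ifs with h h'
  · rw [ofFn_coeff_eq_val_of_lt x h, revAt_le (by omega), ofFn_coeff_eq_zero_of_ge x (by omega),
      map_zero, add_zero]
  · rw [ofFn_coeff_eq_zero_of_ge x (by omega), revAt_le (by omega),
      ofFn_coeff_eq_val_of_lt x (by omega), zero_add]
  · -- `2 * n - 1` truncates at `n = 0`, so `j` need not exceed it
    have hrev : n ≤ revAt (2 * n - 1) j := by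
      rw [← revAtFun_eq, revAtFun]
      split_ifs <;> omega
    rw [ofFn_coeff_eq_zero_of_ge x hrev, ofFn_coeff_eq_zero_of_ge x (by omega), map_zero, add_zero]

theorem coeff_symPoly_of_lt (n : ℕ) (x : Fin n → ℂ) (j : Fin n) :
    (symPoly n x).coeff j = x j := by
  rw [coeff_symPoly, dif_pos j.isLt]

theorem ofFn_symmetrizeZ' (n : ℕ) (x : Fin n → ℂ) :
    ofFn (4 * n - 1) (symmetrizeZ' n x) = X ^ n * symPoly n x := by
  ext i
  rw [coeff_X_pow_mul', coeff_symPoly]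
  by_cases hi : i < 4 * n - 1
  · rw [ofFn_coeff_eq_val_of_lt _ hi, symmetrizeZ']
    dsimp only
    split_ifs <;> first | rfl | omega | (congr 2; ext; simp only; omega)
  · rw [ofFn_coeff_eq_zero_of_ge _ (not_lt.mp hi)]
    split_ifs <;> first | rfl | omega

theorem norm_dft_mulVec_symmetrizeZ' (n : ℕ) (x : Fin n → ℂ) (k : Fin (4 * n - 1)) :
    ‖(dft (4 * n - 1) *ᵥ symmetrizeZ' n x) k‖ =
      ‖(symPoly n x).eval (exp (2 * π * I / (4 * n - 1 : ℕ)) ^ (k : ℕ))‖ / √(4 * n - 1 : ℕ) := by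
  have hω : ‖exp (2 * π * I / (4 * n - 1 : ℕ))‖ = 1 :=
    (isPrimitiveRoot_exp _ k.pos.ne').norm'_eq_one k.pos.ne'
  rw [dft_mulVec_apply, ofFn_symmetrizeZ', eval_mul, eval_pow, eval_X, norm_mul, norm_mul,
    norm_pow, norm_pow, hω, one_pow, one_pow, one_mul, norm_inv, norm_real,
    Real.norm_of_nonneg (Real.sqrt_nonneg _), inv_mul_eq_div]

/-- Injectivity up to global sign of the `4n-1` magnitude Fourier measurements
of `𝒮_z'`. -/
theorem injectivity_symmetrizeZ_prime (n : ℕ) (hn : 0 < n) (x₁ x₂ : Fin n → ℂ)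
    (h : ∀ k, ‖(dft (4 * n - 1)).mulVec (symmetrizeZ' n x₁) k‖ ^ 2 =
      ‖(dft (4 * n - 1)).mulVec (symmetrizeZ' n x₂) k‖ ^ 2) :
    x₁ = x₂ ∨ x₁ = -x₂ := by
  have hm : 4 * n - 1 ≠ 0 := by omega
  have hω := isPrimitiveRoot_exp (4 * n - 1) hm
  have hsq : ∀ k : Fin (4 * n - 1),
      (symPoly n x₁).eval (exp (2 * π * I / (4 * n - 1 : ℕ)) ^ (k : ℕ)) ^ 2 =
        (symPoly n x₂).eval (exp (2 * π * I / (4 * n - 1 : ℕ)) ^ (k : ℕ)) ^ 2 := by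
    intro k
    have hζ : ‖exp (2 * π * I / (4 * n - 1 : ℕ)) ^ (k : ℕ)‖ = 1 := by
      rw [norm_pow, hω.norm'_eq_one hm, one_pow]
    have hsqrt : √(4 * n - 1 : ℕ) ≠ 0 := by positivity
    have hnorm := h k
    rw [norm_dft_mulVec_symmetrizeZ', norm_dft_mulVec_symmetrizeZ', div_pow, div_pow,
      div_left_inj' (pow_ne_zero 2 hsqrt)] at hnorm
    rw [sq_eval_symPoly n x₁ hζ, sq_eval_symPoly n x₂ hζ, hnorm]
  rcases eq_or_eq_neg_of_sq_eval_pow_eq hω (natDegree_symPoly_le n x₁) (natDegree_symPoly_le n x₂)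
    (by omega) hsq with hP | hP
  · exact Or.inl (funext fun j => by simpa [coeff_symPoly_of_lt] using congr_arg (coeff · j) hP)
  · exact Or.inr (funext fun j => by simpa [coeff_symPoly_of_lt] using congr_arg (coeff · j) hP)
end
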